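/- The complete tripartite graph K_{2,2,2} (the octahedron) is not a double approval graph. -/

import Mathlib

/-- An approval interval: a closed interval `[l, r]` with an approval mark
`a`, `l < a < r`. -/
structure ApprovalInterval where
  l : ℝ
  a : ℝ
  r : ℝ
  hla : l < a
  har : a < r

/-- The intervals of `x` and `y` intersect. -/
def AIntersect (x y : ApprovalInterval) : Prop :=
  y.l ≤ x.r ∧ x.l ≤ y.r

/-- Single approval adjacency: the intervals intersect and the intersection
contains exactly one of the two approval marks. -/
def SAAdj (x y : ApprovalInterval) : Prop :=
  AIntersect x y ∧
    Xor' (y.l ≤ x.a ∧ x.a ≤ y.r) (x.l ≤ y.a ∧ y.a ≤ x.r)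

/-- Double approval adjacency: the intervals intersect and the intersection
contains both approval marks. -/
def DAAdj (x y : ApprovalInterval) : Prop :=
  AIntersect x y ∧ (y.l ≤ x.a ∧ x.a ≤ y.r) ∧ (x.l ≤ y.a ∧ y.a ≤ x.r)

/-- `G` is a single approval graph. -/
def IsSAGraph {V : Type*} (G : SimpleGraph V) : Prop :=
  ∃ f : V → ApprovalInterval, ∀ a b : V, G.Adj a b ↔ SAAdj (f a) (f b)

/-- `G` is a double approval graph. -/
def IsDAGraph {V : Type*} (G : SimpleGraph V) : Prop :=
  ∃ f : V → ApprovalInterval, ∀ a b : V, G.Adj a b ↔ a ≠ b ∧ DAAdj (f a) (f b)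

/-- The complete tripartite graph `K_{2,2,2}` (the octahedron): vertices
`{0,1}`, `{2,3}`, `{4,5}` are the three parts, and two vertices are adjacent
iff they lie in different parts. -/
def octahedron : SimpleGraph (Fin 6) where
  Adj i j := (i : ℕ) / 2 ≠ (j : ℕ) / 2
  symm := ⟨fun _ _ h => Ne.symm h⟩
  loopless := ⟨fun _ h => h rfl⟩

/-!
Two vertices of a double approval graph are adjacent iff the mark of each lies in the interval of
the other. So in a non-adjacent pair the mark of one vertex lies outside the interval of the other,
hence strictly to the left, or strictly to the right, of the marks of all common neighbours. In
`K_{2,2,2}` this gives, in each of the three parts, a vertex whose mark lies on one side of all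
marks of the other two parts. Two of these three vertices choose the same side, so each of their
marks is smaller (or larger) than the other.
-/

def IsDARep {V : Type*} (G : SimpleGraph V) (f : V → ApprovalInterval) : Prop :=
  ∀ a b : V, G.Adj a b ↔ a ≠ b ∧ DAAdj (f a) (f b)

theorem daAdj_iff {x y : ApprovalInterval} :
    DAAdj x y ↔ x.a ∈ Set.Icc y.l y.r ∧ y.a ∈ Set.Icc x.l x.r :=
  ⟨fun h => h.2, fun h => ⟨⟨h.1.1.trans x.har.le, h.2.1.trans y.har.le⟩, h⟩⟩

namespace IsDARep

variable {V : Type*} {G : SimpleGraph V} {f : V → ApprovalInterval}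

theorem mark_mem_Icc (hf : IsDARep G f) {u z : V} (h : G.Adj u z) :
    (f z).a ∈ Set.Icc (f u).l (f u).r :=
  (daAdj_iff.mp ((hf u z).mp h).2).2

theorem exists_mark_lt_or_gt_of_not_adj (hf : IsDARep G f) {u v : V} (hne : u ≠ v)
    (h : ¬ G.Adj u v) :
    ∃ p, (p = u ∨ p = v) ∧
      ((∀ z, G.Adj u z → G.Adj v z → (f p).a < (f z).a) ∨
        (∀ z, G.Adj u z → G.Adj v z → (f z).a < (f p).a)) := by
  have hnd : ¬ DAAdj (f u) (f v) := fun hd => h ((hf u v).mpr ⟨hne, hd⟩)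
  simp only [daAdj_iff, Set.mem_Icc, not_and_or, not_le] at hnd
  rcases hnd with (hlt | hgt) | (hlt | hgt)
  · exact ⟨u, .inl rfl, .inl fun z _ hz => hlt.trans_le (hf.mark_mem_Icc hz).1⟩
  · exact ⟨u, .inl rfl, .inr fun z _ hz => (hf.mark_mem_Icc hz).2.trans_lt hgt⟩
  · exact ⟨v, .inr rfl, .inl fun z hz _ => hlt.trans_le (hf.mark_mem_Icc hz).1⟩
  · exact ⟨v, .inr rfl, .inr fun z hz _ => (hf.mark_mem_Icc hz).2.trans_lt hgt⟩

end IsDARep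

instance : DecidableRel octahedron.Adj := fun i j =>
  inferInstanceAs (Decidable ((i : ℕ) / 2 ≠ (j : ℕ) / 2))

theorem stmt_18 : ¬ IsDAGraph octahedron := by
  rintro ⟨f, hf : IsDARep octahedron f⟩
  obtain ⟨p₀, hp₀, h₀⟩ := hf.exists_mark_lt_or_gt_of_not_adj
    (u := 0) (v := 1) (by decide) (by decide)
  obtain ⟨p₁, hp₁, h₁⟩ := hf.exists_mark_lt_or_gt_of_not_adj
    (u := 2) (v := 3) (by decide) (by decide)
  obtain ⟨p₂, hp₂, h₂⟩ := hf.exists_mark_lt_or_gt_of_not_adj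
    (u := 4) (v := 5) (by decide) (by decide)
  have a₀₁ : octahedron.Adj 0 p₁ ∧ octahedron.Adj 1 p₁ := by
    rcases hp₁ with rfl | rfl <;> decide
  have a₀₂ : octahedron.Adj 0 p₂ ∧ octahedron.Adj 1 p₂ := by
    rcases hp₂ with rfl | rfl <;> decide
  have a₁₀ : octahedron.Adj 2 p₀ ∧ octahedron.Adj 3 p₀ := by
    rcases hp₀ with rfl | rfl <;> decide
  have a₁₂ : octahedron.Adj 2 p₂ ∧ octahedron.Adj 3 p₂ := by
    rcases hp₂ with rfl | rfl <;> decide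
  have a₂₀ : octahedron.Adj 4 p₀ ∧ octahedron.Adj 5 p₀ := by
    rcases hp₀ with rfl | rfl <;> decide
  have a₂₁ : octahedron.Adj 4 p₁ ∧ octahedron.Adj 5 p₁ := by
    rcases hp₁ with rfl | rfl <;> decide
  rcases h₀ with h₀ | h₀ <;> rcases h₁ with h₁ | h₁ <;> rcases h₂ with h₂ | h₂ <;>
    linarith [h₀ p₁ a₀₁.1 a₀₁.2, h₀ p₂ a₀₂.1 a₀₂.2, h₁ p₀ a₁₀.1 a₁₀.2, h₁ p₂ a₁₂.1 a₁₂.2,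
      h₂ p₀ a₂₀.1 a₂₀.2, h₂ p₁ a₂₁.1 a₂₁.2]
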